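/- Let φ : A* → M be a monoid homomorphism, c ∈ A, B = A \ {c}, φ_c : B* → M the restriction of φ, T = φ_c(B*) viewed as a finite alphabet, σ : (B*c)* → T* the substitution with σ(v₁c⋯v_k c) = φ_c(v₁)⋯φ_c(v_k), and ψ : T* → M_{φ(c)} the homomorphism into the local divisor of M at φ(c) with ψ(φ_c(v)) = φ(cvc) on letters. Then for every p ∈ φ(c)M ∩ Mφ(c): φ^{-1}(p) ∩ cA* ∩ A*c = c · σ^{-1}(ψ^{-1}(p)), where c · K denotes {cw : w ∈ K} and cA* (resp. A*c) is the set of words beginning (resp. ending) with c. -/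

import Mathlib

variable {M : Type*} [Monoid M]

/-- The underlying set `cM ∩ Mc` of the local divisor of `M` at `c`. -/
def LD (M : Type*) [Monoid M] (c : M) : Set M :=
  {z | (∃ y, z = c * y) ∧ (∃ x, z = x * c)}

namespace LD

variable {c : M}

/-- The multiplication `(xc) ∘ (cy) = xcy` of the local divisor at `c`,
defined via a choice of `x` with `z₁ = x * c`. -/
noncomputable def mul (z₁ z₂ : LD M c) : LD M c := by
  refine ⟨z₁.2.2.choose * (z₂ : M), ?_, ?_⟩
  · obtain ⟨y₁, hy₁⟩ := z₁.2.1
    obtain ⟨y₂, hy₂⟩ := z₂.2.1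
    refine ⟨y₁ * y₂, ?_⟩
    calc z₁.2.2.choose * (z₂ : M) = z₁.2.2.choose * (c * y₂) := by rw [← hy₂]
      _ = z₁.2.2.choose * c * y₂ := (mul_assoc _ _ _).symm
      _ = (z₁ : M) * y₂ := by rw [← z₁.2.2.choose_spec]
      _ = c * y₁ * y₂ := by rw [hy₁]
      _ = c * (y₁ * y₂) := mul_assoc _ _ _
  · obtain ⟨x₂, hx₂⟩ := z₂.2.2
    exact ⟨z₁.2.2.choose * x₂, by rw [hx₂, mul_assoc]⟩

noncomputable instance : Mul (LD M c) := ⟨mul⟩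

instance : One (LD M c) := ⟨⟨c, ⟨1, (mul_one c).symm⟩, ⟨1, (one_mul c).symm⟩⟩⟩

@[simp] theorem one_val : ((1 : LD M c) : M) = c := rfl

/-- The multiplication of the local divisor is well defined:
if `z₁ = x * c` then `z₁ ∘ z₂ = x * z₂`. -/
theorem mul_val (z₁ z₂ : LD M c) (x : M) (hx : (z₁ : M) = x * c) :
    ((z₁ * z₂ : LD M c) : M) = x * (z₂ : M) := by
  show z₁.2.2.choose * (z₂ : M) = x * (z₂ : M)
  obtain ⟨y₂, hy₂⟩ := z₂.2.1
  calc z₁.2.2.choose * (z₂ : M) = z₁.2.2.choose * (c * y₂) := by rw [← hy₂]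
    _ = z₁.2.2.choose * c * y₂ := (mul_assoc _ _ _).symm
    _ = x * c * y₂ := by rw [← z₁.2.2.choose_spec, hx]
    _ = x * (c * y₂) := mul_assoc _ _ _
    _ = x * (z₂ : M) := by rw [← hy₂]

/-- The local divisor `M_c = (cM ∩ Mc, ∘, c)` of the monoid `M` at `c`. -/
noncomputable instance monoid : Monoid (LD M c) where
  mul_assoc a b d := by
    obtain ⟨xa, hxa⟩ := a.2.2
    have hab : ((a * b : LD M c) : M) = xa * (b : M) := mul_val a b xa hxa
    obtain ⟨xb, hxb⟩ := b.2.2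
    have hab' : ((a * b : LD M c) : M) = (xa * xb) * c := by rw [hab, hxb, mul_assoc]
    apply Subtype.ext
    rw [mul_val (a * b) d (xa * xb) hab', mul_val a (b * d) xa hxa,
      mul_val b d xb hxb, mul_assoc]
  one_mul a := Subtype.ext <| by
    rw [mul_val 1 a 1 (one_mul c).symm, one_mul]
  mul_one a := Subtype.ext <| by
    obtain ⟨xa, hxa⟩ := a.2.2
    rw [mul_val a 1 xa hxa, one_val, ← hxa]

end LD

/-- The image `T = φ_c(B*)` of the set of words avoiding the letter `c` under `φ`,
used as a finite alphabet. -/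
def Tset {A M : Type*} [Monoid M] (φ : FreeMonoid A →* M) (c : A) : Set M :=
  {m | ∃ v : FreeMonoid A, (∀ a ∈ v, a ≠ c) ∧ φ v = m}

/-!
A word lies in `cA* ∩ A*c` exactly when it is `c v₁c ⋯ v_kc` with every `v_i` free of `c`
(cut it after each occurrence of `c`). Since the local divisor multiplies by `(xc) ∘ z = xz`,
induction on `k` gives `ψ(σ(v₁c ⋯ v_kc)) = φ(c)φ(v₁)φ(c) ⋯ φ(v_k)φ(c) = φ(c v₁c ⋯ v_kc)` in `M`,
so the conditions `φ(w) = p` and `ψ(σ(c⁻¹w)) = p` coincide.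
-/

section Blocks

variable {A : Type*}

/-- The word `v₁c ⋯ v_kc` of `(B*c)*` described by the blocks `[v₁, …, v_k]`. -/
def blockWord (c : A) (L : List {v : FreeMonoid A // ∀ a ∈ v, a ≠ c}) : FreeMonoid A :=
  (L.map fun v => v.val * FreeMonoid.of c).prod

/-- The substitution `σ(v₁c ⋯ v_kc) = φ_c(v₁) ⋯ φ_c(v_k)`. -/
def blockSubst (φ : FreeMonoid A →* M) (c : A) (L : List {v : FreeMonoid A // ∀ a ∈ v, a ≠ c}) :
    FreeMonoid (Tset φ c) :=
  FreeMonoid.ofList (L.map fun v => (⟨φ v.val, v.val, v.2, rfl⟩ : Tset φ c))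

theorem LD.coe_ofList {T : Type*} {m : M} (ψ : FreeMonoid T →* LD M m) (f : T → M)
    (hψ : ∀ t, ((ψ (FreeMonoid.of t) : LD M m) : M) = m * f t * m) (L : List T) :
    ((ψ (FreeMonoid.ofList L) : LD M m) : M) = m * (L.map fun t => f t * m).prod := by
  induction L with
  | nil => simp [FreeMonoid.ofList_nil]
  | cons t L ih =>
    rw [FreeMonoid.ofList_cons, map_mul, LD.mul_val _ _ (m * f t) (hψ t), ih]
    simp only [List.map_cons, List.prod_cons, mul_assoc]

theorem coe_blockSubst (φ : FreeMonoid A →* M) (c : A)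
    (ψ : FreeMonoid (Tset φ c) →* LD M (φ (FreeMonoid.of c)))
    (hψ : ∀ t : Tset φ c,
      ((ψ (FreeMonoid.of t) : LD M (φ (FreeMonoid.of c))) : M) =
        φ (FreeMonoid.of c) * (t : M) * φ (FreeMonoid.of c))
    (L : List {v : FreeMonoid A // ∀ a ∈ v, a ≠ c}) :
    ((ψ (blockSubst φ c L) : LD M (φ (FreeMonoid.of c))) : M) =
      φ (FreeMonoid.of c * blockWord c L) := by
  rw [blockSubst, LD.coe_ofList ψ Subtype.val hψ, map_mul, blockWord, map_list_prod,
    List.map_map, List.map_map]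
  simp only [Function.comp_def, map_mul]

theorem exists_blockWord_eq_mul_ofList_append (c : A) (u : List A) :
    ∀ v : {v : FreeMonoid A // ∀ a ∈ v, a ≠ c},
      ∃ L, v.val * FreeMonoid.ofList (u ++ [c]) = blockWord c L := by
  induction u with
  | nil => exact fun v => ⟨[v], by simp [blockWord]⟩
  | cons a u ih =>
    intro v
    by_cases hac : a = c
    · obtain ⟨L, hL⟩ := ih ⟨1, fun b hb => absurd hb FreeMonoid.notMem_one⟩
      refine ⟨v :: L, ?_⟩
      rw [one_mul] at hL
      rw [blockWord, List.map_cons, List.prod_cons, ← blockWord, ← hL, List.cons_append,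
        FreeMonoid.ofList_cons, hac, mul_assoc]
    · have hva : ∀ b ∈ v.val * FreeMonoid.of a, b ≠ c := fun b hb => by
        rcases FreeMonoid.mem_mul.mp hb with hv | hb
        · exact v.2 b hv
        · exact FreeMonoid.mem_of.mp hb ▸ hac
      obtain ⟨L, hL⟩ := ih ⟨_, hva⟩
      exact ⟨L, by simpa [mul_assoc] using hL⟩

theorem exists_blockWord_of_of_mul_eq_mul_of {c : A} {u u' : FreeMonoid A}
    (h : FreeMonoid.of c * u = u' * FreeMonoid.of c) : ∃ L, u = blockWord c L := by
  rcases List.eq_nil_or_concat u.toList with hu | ⟨l, a, hu⟩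
  · exact ⟨[], FreeMonoid.toList.injective hu⟩
  have hac : a = c := by
    have hlast := congrArg (fun w : FreeMonoid A => w.toList.getLast?) h
    simp only [FreeMonoid.toList_mul, FreeMonoid.toList_of, hu, List.concat_eq_append,
      List.getLast?_append, List.getLast?_singleton] at hlast
    simpa using hlast
  obtain ⟨L, hL⟩ := exists_blockWord_eq_mul_ofList_append c l
    ⟨1, fun b hb => absurd hb FreeMonoid.notMem_one⟩
  refine ⟨L, ?_⟩
  rw [← hL, one_mul, ← hac, ← List.concat_eq_append, ← hu, FreeMonoid.ofList_toList]

theorem exists_mul_of_mul_blockWord_eq_mul_of {c : A} (L : List {v : FreeMonoid A // ∀ a ∈ v, a ≠ c})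
    (y : FreeMonoid A) : ∃ u, y * FreeMonoid.of c * blockWord c L = u * FreeMonoid.of c := by
  induction L generalizing y with
  | nil => exact ⟨y, by simp [blockWord]⟩
  | cons v L ih =>
    obtain ⟨u, hu⟩ := ih (y * FreeMonoid.of c * v.val)
    exact ⟨u, by simpa [blockWord, mul_assoc] using hu⟩

end Blocks

theorem preimage_eq_c_mul_sigmaInv_psiInv_general {A : Type*}
    (φ : FreeMonoid A →* M) (c : A)
    (ψ : FreeMonoid (Tset φ c) →* LD M (φ (FreeMonoid.of c)))
    (hψ : ∀ t : Tset φ c,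
      ((ψ (FreeMonoid.of t) : LD M (φ (FreeMonoid.of c))) : M) =
        φ (FreeMonoid.of c) * (t : M) * φ (FreeMonoid.of c))
    (p : M) (hp : p ∈ LD M (φ (FreeMonoid.of c))) :
    {w : FreeMonoid A | φ w = p} ∩ {w | ∃ u, w = FreeMonoid.of c * u} ∩
        {w | ∃ u, w = u * FreeMonoid.of c} =
      {w : FreeMonoid A | ∃ w' : FreeMonoid A,
        w = FreeMonoid.of c * w' ∧
        ∃ L : List {v : FreeMonoid A // ∀ a ∈ v, a ≠ c},
          w' = (L.map fun v => v.val * FreeMonoid.of c).prod ∧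
          ψ (FreeMonoid.ofList
              (L.map fun v => (⟨φ v.val, v.val, v.2, rfl⟩ : Tset φ c))) = ⟨p, hp⟩} := by
  ext w
  constructor
  · rintro ⟨⟨hφw, u, rfl⟩, u', hu'⟩
    obtain ⟨L, rfl⟩ := exists_blockWord_of_of_mul_eq_mul_of hu'
    exact ⟨_, rfl, L, rfl, Subtype.ext <| (coe_blockSubst φ c ψ hψ L).trans hφw⟩
  · rintro ⟨_, rfl, L, rfl, hψL⟩
    refine ⟨⟨?_, _, rfl⟩, by simpa [blockWord] using exists_mul_of_mul_blockWord_eq_mul_of L 1⟩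
    exact (coe_blockSubst φ c ψ hψ L).symm.trans (congrArg Subtype.val hψL)

/-- Let `φ : A* → M`, `c ∈ A`, `B = A \ {c}`, `T = φ_c(B*)`, let
`σ : (B*c)* → T*` be the block substitution `σ(v₁c⋯v_kc) = φ_c(v₁)⋯φ_c(v_k)`, and let
`ψ : T* → M_{φ(c)}` be the homomorphism into the local divisor at `φ(c)` with
`ψ(φ_c(v)) = φ(cvc)` on letters.  Then for every `p ∈ φ(c)M ∩ Mφ(c)`:
`φ⁻¹(p) ∩ cA* ∩ A*c = c · σ⁻¹(ψ⁻¹(p))`. -/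
theorem preimage_eq_c_mul_sigmaInv_psiInv {A : Type*} [Finite A]
    (φ : FreeMonoid A →* M) (c : A)
    (ψ : FreeMonoid (Tset φ c) →* LD M (φ (FreeMonoid.of c)))
    (hψ : ∀ t : Tset φ c,
      ((ψ (FreeMonoid.of t) : LD M (φ (FreeMonoid.of c))) : M) =
        φ (FreeMonoid.of c) * (t : M) * φ (FreeMonoid.of c))
    (p : M) (hp : p ∈ LD M (φ (FreeMonoid.of c))) :
    {w : FreeMonoid A | φ w = p} ∩ {w | ∃ u, w = FreeMonoid.of c * u} ∩
        {w | ∃ u, w = u * FreeMonoid.of c} =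
      {w : FreeMonoid A | ∃ w' : FreeMonoid A,
        w = FreeMonoid.of c * w' ∧
        ∃ L : List {v : FreeMonoid A // ∀ a ∈ v, a ≠ c},
          w' = (L.map fun v => v.val * FreeMonoid.of c).prod ∧
          ψ (FreeMonoid.ofList
              (L.map fun v => (⟨φ v.val, v.val, v.2, rfl⟩ : Tset φ c))) = ⟨p, hp⟩} :=
  preimage_eq_c_mul_sigmaInv_psiInv_general φ c ψ hψ p hp
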